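/- Let d ≥ 2, M ≥ 2 and let p(abc|xyz) be a tripartite no-signaling conditional probability distribution with inputs x,y,z ∈ Fin M and outputs a,b,c ∈ Fin d. Define I_AB^{M,d} := ∑_{α=1}^{M} (⟨A_α - B_α⟩ + ⟨B_α - A_{α+1}⟩) and I_AC^{M,d} analogously for parties A and C, where ⟨X_x - Y_y⟩ := ∑_{a,b} ((a-b : ZMod d).val) · p_{XY}(a,b|x,y) and A_{M+1} := A_1 + 1 (i.e. the bracket shifts by 1). Then (M-1)·I_AB^{M,d} + I_AC^{M,d} ≥ M(d-1). -/

import Mathlib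

open Finset

noncomputable section

/-- Deterministic bracket `⟨x - y⟩`: the representative in `{0,…,d-1}` of `x - y` mod `d`. -/
def dval (d : ℕ) (x y : Fin d) : ℕ := (((x : ℕ) : ZMod d) - ((y : ℕ) : ZMod d)).val

/-- Shifted deterministic bracket `⟨x - y - 1⟩` mod `d`. -/
def dvalShift (d : ℕ) (x y : Fin d) : ℕ :=
  (((x : ℕ) : ZMod d) - ((y : ℕ) : ZMod d) - 1).val

/-- The BKP Bell expression `I^{M,d}(p) = ∑_α (⟨A_α - B_α⟩ + ⟨B_α - A_{α+1}⟩)` of a bipartite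
box `p(a,b|x,y)`, with the convention `A_{M+1} = A_1 + 1`. -/
def BKP (d M : ℕ) (hM : 0 < M) (p : Fin d → Fin d → Fin M → Fin M → ℝ) : ℝ :=
  ∑ α : Fin M,
    ((∑ a : Fin d, ∑ b : Fin d, (dval d a b : ℝ) * p a b α α) +
      if h : (α : ℕ) + 1 < M then
        ∑ a : Fin d, ∑ b : Fin d, (dval d b a : ℝ) * p a b ⟨(α : ℕ) + 1, h⟩ α
      else
        ∑ a : Fin d, ∑ b : Fin d, (dvalShift d b a : ℝ) * p a b ⟨0, hM⟩ α)

/-- No-signaling conditions for a tripartite box `p(a,b,c|x,y,z)`. -/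
def NoSignalingTri (d M : ℕ)
    (p : Fin d → Fin d → Fin d → Fin M → Fin M → Fin M → ℝ) : Prop :=
  (∀ b c x x' y z, ∑ a, p a b c x y z = ∑ a, p a b c x' y z) ∧
  (∀ a c x y y' z, ∑ b, p a b c x y z = ∑ b, p a b c x y' z) ∧
  (∀ a b x y z z', ∑ c, p a b c x y z = ∑ c, p a b c x y z')

open Fin.NatCast

namespace BKPMono

variable {d M : ℕ}

def em (d : ℕ) (a : Fin d) : ZMod d := ((a : ℕ) : ZMod d)

/-- generic expectation of a ℕ-valued weight against the tripartite box -/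
def EE (d M : ℕ) (p : Fin d → Fin d → Fin d → Fin M → Fin M → Fin M → ℝ)
    (w : Fin d → Fin d → Fin d → ℕ) (x y z : Fin M) : ℝ :=
  ∑ a, ∑ b, ∑ c, (w a b c : ℝ) * p a b c x y z

lemma val_le_add (hd : 2 ≤ d) {u v w : ZMod d} (h : u = v + w) :
    u.val ≤ v.val + w.val := by
  haveI : NeZero d := ⟨by omega⟩
  subst h
  rw [ZMod.val_add]
  exact Nat.mod_le _ _

lemma val_neg_one (hd : 2 ≤ d) : (-1 : ZMod d).val = d - 1 := by
  haveI : NeZero d := ⟨by omega⟩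
  have h1 : (-1 : ZMod d) = ((d - 1 : ℕ) : ZMod d) := by
    have hdd : ((d : ℕ) : ZMod d) = 0 := ZMod.natCast_self d
    rw [Nat.cast_sub (by omega), hdd, Nat.cast_one]
    ring
  rw [h1, ZMod.val_cast_of_lt (by omega)]

lemma EE_le_add (p : Fin d → Fin d → Fin d → Fin M → Fin M → Fin M → ℝ)
    (hpos : ∀ a b c x y z, 0 ≤ p a b c x y z)
    {w1 w2 w3 : Fin d → Fin d → Fin d → ℕ}
    (h : ∀ a b c, w3 a b c ≤ w1 a b c + w2 a b c) (x y z : Fin M) :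
    EE d M p w3 x y z ≤ EE d M p w1 x y z + EE d M p w2 x y z := by
  unfold EE
  rw [← Finset.sum_add_distrib]
  refine Finset.sum_le_sum fun a _ => ?_
  rw [← Finset.sum_add_distrib]
  refine Finset.sum_le_sum fun b _ => ?_
  rw [← Finset.sum_add_distrib]
  refine Finset.sum_le_sum fun c _ => ?_
  rw [← add_mul]
  exact mul_le_mul_of_nonneg_right (by exact_mod_cast h a b c) (hpos a b c x y z)

lemma EE_y (p : Fin d → Fin d → Fin d → Fin M → Fin M → Fin M → ℝ)
    (hns : NoSignalingTri d M p) (v : Fin d → Fin d → ℕ) (x z y y' : Fin M) :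
    EE d M p (fun a _ c => v a c) x y z = EE d M p (fun a _ c => v a c) x y' z := by
  unfold EE
  refine Finset.sum_congr rfl fun a _ => ?_
  rw [Finset.sum_comm]
  conv_rhs => rw [Finset.sum_comm]
  refine Finset.sum_congr rfl fun c _ => ?_
  rw [← Finset.mul_sum, ← Finset.mul_sum, hns.2.1 a c x y y' z]

lemma EE_x (p : Fin d → Fin d → Fin d → Fin M → Fin M → Fin M → ℝ)
    (hns : NoSignalingTri d M p) (v : Fin d → Fin d → ℕ) (y z x x' : Fin M) :
    EE d M p (fun _ b c => v b c) x y z = EE d M p (fun _ b c => v b c) x' y z := by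
  unfold EE
  rw [Finset.sum_comm]
  conv_rhs => rw [Finset.sum_comm]
  refine Finset.sum_congr rfl fun b _ => ?_
  rw [Finset.sum_comm]
  conv_rhs => rw [Finset.sum_comm]
  refine Finset.sum_congr rfl fun c _ => ?_
  rw [← Finset.mul_sum, ← Finset.mul_sum, hns.1 b c x x' y z]

lemma EE_z (p : Fin d → Fin d → Fin d → Fin M → Fin M → Fin M → ℝ)
    (hns : NoSignalingTri d M p) (v : Fin d → Fin d → ℕ) (x y z z' : Fin M) :
    EE d M p (fun a b _ => v a b) x y z = EE d M p (fun a b _ => v a b) x y z' := by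
  unfold EE
  refine Finset.sum_congr rfl fun a _ => Finset.sum_congr rfl fun b _ => ?_
  rw [← Finset.mul_sum, ← Finset.mul_sum, hns.2.2 a b x y z z']

lemma EE_const (p : Fin d → Fin d → Fin d → Fin M → Fin M → Fin M → ℝ)
    (hnorm : ∀ x y z, ∑ a, ∑ b, ∑ c, p a b c x y z = 1)
    (n : ℕ) (x y z : Fin M) :
    EE d M p (fun _ _ _ => n) x y z = n := by
  unfold EE
  simp only [← Finset.mul_sum]
  rw [hnorm x y z, mul_one]



/-- the shift attached to the step `α → α+1` (1 exactly at the wrap-around). -/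
def dlt (d M : ℕ) (α : Fin M) : ZMod d := if (α : ℕ) + 1 < M then 0 else 1

variable [NeZero M]

lemma fin_mk_succ (hM : 2 ≤ M) (α : Fin M) (h : (α : ℕ) + 1 < M) :
    (⟨(α : ℕ) + 1, h⟩ : Fin M) = α + 1 := by
  apply Fin.ext
  have h1 : 1 % M = 1 := Nat.mod_eq_of_lt (by omega)
  rw [Fin.val_add, Fin.val_one' M, h1, Nat.mod_eq_of_lt h]

lemma fin_mk_zero_succ (hM : 2 ≤ M) (hM0 : 0 < M) (α : Fin M) (h : ¬ (α : ℕ) + 1 < M) :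
    (⟨0, hM0⟩ : Fin M) = α + 1 := by
  apply Fin.ext
  have hα : (α : ℕ) + 1 = M := by have := α.isLt; omega
  have h1 : 1 % M = 1 := Nat.mod_eq_of_lt (by omega)
  rw [Fin.val_add, Fin.val_one' M, h1, hα, Nat.mod_self]

def T1 (d M : ℕ) (hM0 : 0 < M) (p : Fin d → Fin d → Fin d → Fin M → Fin M → Fin M → ℝ)
    (α : Fin M) : ℝ :=
  EE d M p (fun a b _ => dval d a b) α α ⟨0, hM0⟩

def T2 (d M : ℕ) [NeZero M] (hM0 : 0 < M)
    (p : Fin d → Fin d → Fin d → Fin M → Fin M → Fin M → ℝ) (α : Fin M) : ℝ :=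
  EE d M p (fun a b _ => (em d b - em d a - dlt d M α).val) (α + 1) α ⟨0, hM0⟩

def U1 (d M : ℕ) (hM0 : 0 < M) (p : Fin d → Fin d → Fin d → Fin M → Fin M → Fin M → ℝ)
    (α : Fin M) : ℝ :=
  EE d M p (fun a _ c => dval d a c) α ⟨0, hM0⟩ α

def U2 (d M : ℕ) [NeZero M] (hM0 : 0 < M)
    (p : Fin d → Fin d → Fin d → Fin M → Fin M → Fin M → ℝ) (α : Fin M) : ℝ :=
  EE d M p (fun a _ c => (em d c - em d a - dlt d M α).val) (α + 1) ⟨0, hM0⟩ α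

lemma bkp_ab (hM : 2 ≤ M) (hM0 : 0 < M)
    (p : Fin d → Fin d → Fin d → Fin M → Fin M → Fin M → ℝ) :
    BKP d M hM0 (fun a b x y => ∑ c, p a b c x y ⟨0, hM0⟩)
      = ∑ α : Fin M, (T1 d M hM0 p α + T2 d M hM0 p α) := by
  unfold BKP
  refine Finset.sum_congr rfl fun α _ => ?_
  congr 1
  · unfold T1 EE
    exact Finset.sum_congr rfl fun a _ => Finset.sum_congr rfl fun b _ =>
      Finset.mul_sum _ _ _
  · by_cases h : (α : ℕ) + 1 < M
    · rw [dif_pos h]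
      unfold T2 EE
      rw [← fin_mk_succ hM α h]
      have hdl : dlt d M α = 0 := if_pos h
      refine Finset.sum_congr rfl fun a _ => Finset.sum_congr rfl fun b _ => ?_
      rw [Finset.mul_sum]
      refine Finset.sum_congr rfl fun c _ => ?_
      simp [dval, em, hdl]
    · rw [dif_neg h]
      unfold T2 EE
      rw [← fin_mk_zero_succ hM hM0 α h]
      have hdl : dlt d M α = 1 := if_neg h
      refine Finset.sum_congr rfl fun a _ => Finset.sum_congr rfl fun b _ => ?_
      rw [Finset.mul_sum]
      refine Finset.sum_congr rfl fun c _ => ?_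
      simp [dvalShift, em, hdl]

lemma bkp_ac (hM : 2 ≤ M) (hM0 : 0 < M)
    (p : Fin d → Fin d → Fin d → Fin M → Fin M → Fin M → ℝ) :
    BKP d M hM0 (fun a c x z => ∑ b, p a b c x ⟨0, hM0⟩ z)
      = ∑ α : Fin M, (U1 d M hM0 p α + U2 d M hM0 p α) := by
  unfold BKP
  refine Finset.sum_congr rfl fun α _ => ?_
  congr 1
  · unfold U1 EE
    refine Finset.sum_congr rfl fun a _ => ?_
    rw [Finset.sum_comm]
    refine Finset.sum_congr rfl fun c _ => ?_
    exact Finset.mul_sum _ _ _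
  · by_cases h : (α : ℕ) + 1 < M
    · rw [dif_pos h]
      unfold U2 EE
      rw [← fin_mk_succ hM α h]
      have hdl : dlt d M α = 0 := if_pos h
      refine Finset.sum_congr rfl fun a _ => ?_
      rw [Finset.sum_comm]
      refine Finset.sum_congr rfl fun c _ => ?_
      rw [Finset.mul_sum]
      refine Finset.sum_congr rfl fun b _ => ?_
      simp [dval, em, hdl]
    · rw [dif_neg h]
      unfold U2 EE
      rw [← fin_mk_zero_succ hM hM0 α h]
      have hdl : dlt d M α = 1 := if_neg h
      refine Finset.sum_congr rfl fun a _ => ?_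
      rw [Finset.sum_comm]
      refine Finset.sum_congr rfl fun c _ => ?_
      rw [Finset.mul_sum]
      refine Finset.sum_congr rfl fun b _ => ?_
      simp [dvalShift, em, hdl]

lemma dlt_total (hd : 2 ≤ d) (hM : 2 ≤ M) (k : Fin M) :
    ∑ i ∈ Finset.range M, dlt d M (k + (i : Fin M)) = 1 := by
  have h1 : ∑ i ∈ Finset.range M, dlt d M (k + (i : Fin M))
      = ∑ α : Fin M, dlt d M (k + α) := by
    rw [← Fin.sum_univ_eq_sum_range (fun i => dlt d M (k + ((i : ℕ) : Fin M))) M]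
    exact Finset.sum_congr rfl fun α _ => by rw [Fin.cast_val_eq_self]
  have h2 : ∑ α : Fin M, dlt d M (k + α) = ∑ β : Fin M, dlt d M β :=
    Fintype.sum_equiv (Equiv.addLeft k) _ _ (fun α => rfl)
  have h3 : ∀ β : Fin M, dlt d M β = if β = (⟨M - 1, by omega⟩ : Fin M) then 1 else 0 := by
    intro β
    unfold dlt
    by_cases h : (β : ℕ) + 1 < M
    · rw [if_pos h, if_neg]
      intro hc
      rw [Fin.ext_iff] at hc
      simp at hc
      omega
    · rw [if_neg h, if_pos]
      apply Fin.ext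
      have := β.isLt
      simp
      omega
  rw [h1, h2]
  simp only [h3]
  rw [Finset.sum_ite_eq' Finset.univ]
  simp



variable [NeZero d]

/-- the propagated "state" after consuming `j` A–B pairs of cycle `k`. -/
def St (d M : ℕ) [NeZero M] (hM0 : 0 < M)
    (p : Fin d → Fin d → Fin d → Fin M → Fin M → Fin M → ℝ) (k : Fin M) (j : ℕ) : ℝ :=
  EE d M p
    (fun a _ c => (em d c - em d a - ∑ i ∈ Finset.range (j + 1), dlt d M (k + (i : Fin M))).val)
    (k + ((j + 1 : ℕ) : Fin M)) ⟨0, hM0⟩ k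

lemma chain (hd : 2 ≤ d) (hM : 2 ≤ M) (hM0 : 0 < M)
    (p : Fin d → Fin d → Fin d → Fin M → Fin M → Fin M → ℝ)
    (hpos : ∀ a b c x y z, 0 ≤ p a b c x y z)
    (hns : NoSignalingTri d M p) (k : Fin M) (j : ℕ) :
    St d M hM0 p k j ≤ U2 d M hM0 p k +
      ∑ i ∈ Finset.range j,
        (T1 d M hM0 p (k + ((i + 1 : ℕ) : Fin M)) + T2 d M hM0 p (k + ((i + 1 : ℕ) : Fin M))) := by
  induction j with
  | zero =>
      have : St d M hM0 p k 0 = U2 d M hM0 p k := by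
        unfold St U2
        norm_num
      rw [this]
      simp
  | succ j ih =>
      set α : Fin M := k + ((j + 1 : ℕ) : Fin M) with hα
      set σ : ZMod d := ∑ i ∈ Finset.range (j + 1), dlt d M (k + (i : Fin M)) with hσ
      -- step A : state (with y moved to α) plus T1 α dominates the b-state
      have hStj : St d M hM0 p k j
          = EE d M p (fun a _ c => (em d c - em d a - σ).val) α α k := by
        unfold St
        rw [EE_y p hns _ α k ⟨0, hM0⟩ α]
      have hT1 : T1 d M hM0 p α = EE d M p (fun a b _ => dval d a b) α α k := by
        unfold T1
        rw [EE_z p hns _ α α ⟨0, hM0⟩ k]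
      have stepA : EE d M p (fun _ b c => (em d c - em d b - σ).val) α α k
          ≤ St d M hM0 p k j + T1 d M hM0 p α := by
        rw [hStj, hT1]
        refine EE_le_add p hpos (fun a b c => ?_) α α k
        refine val_le_add hd ?_
        unfold em
        ring
      -- step B : move x to α+1, add T2 α
      have hMid : EE d M p (fun _ b c => (em d c - em d b - σ).val) α α k
          = EE d M p (fun _ b c => (em d c - em d b - σ).val) (α + 1) α k := by
        rw [EE_x p hns _ α k α (α + 1)]
      have hT2 : T2 d M hM0 p α
          = EE d M p (fun a b _ => (em d b - em d a - dlt d M α).val) (α + 1) α k := by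
        unfold T2
        rw [EE_z p hns _ (α + 1) α ⟨0, hM0⟩ k]
      have stepB : EE d M p (fun a _ c => (em d c - em d a - (σ + dlt d M α)).val) (α + 1) α k
          ≤ EE d M p (fun _ b c => (em d c - em d b - σ).val) (α + 1) α k
            + T2 d M hM0 p α := by
        rw [hT2]
        refine EE_le_add p hpos (fun a b c => ?_) (α + 1) α k
        refine val_le_add hd ?_
        ring
      -- identify the new state
      have hNew : St d M hM0 p k (j + 1)
          = EE d M p (fun a _ c => (em d c - em d a - (σ + dlt d M α)).val) (α + 1) α k := by
        unfold St
        rw [EE_y p hns _ (k + ((j + 1 + 1 : ℕ) : Fin M)) k ⟨0, hM0⟩ α]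
        have hidx : k + ((j + 1 + 1 : ℕ) : Fin M) = α + 1 := by
          rw [hα]
          rw [Nat.cast_succ (R := Fin M) (j + 1), add_assoc]
        have hsig : ∑ i ∈ Finset.range (j + 1 + 1), dlt d M (k + (i : Fin M))
            = σ + dlt d M α := by
          rw [Finset.sum_range_succ, hσ, hα]
        rw [hidx, hsig]
      rw [Finset.sum_range_succ, hNew]
      calc EE d M p (fun a _ c => (em d c - em d a - (σ + dlt d M α)).val) (α + 1) α k
          ≤ EE d M p (fun _ b c => (em d c - em d b - σ).val) (α + 1) α k
              + T2 d M hM0 p α := stepB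
        _ = EE d M p (fun _ b c => (em d c - em d b - σ).val) α α k + T2 d M hM0 p α := by
              rw [hMid]
        _ ≤ St d M hM0 p k j + T1 d M hM0 p α + T2 d M hM0 p α := by
              linarith [stepA]
        _ ≤ _ := by
              have := ih
              linarith

lemma cycle (hd : 2 ≤ d) (hM : 2 ≤ M) (hM0 : 0 < M)
    (p : Fin d → Fin d → Fin d → Fin M → Fin M → Fin M → ℝ)
    (hpos : ∀ a b c x y z, 0 ≤ p a b c x y z)
    (hnorm : ∀ x y z, ∑ a, ∑ b, ∑ c, p a b c x y z = 1)
    (hns : NoSignalingTri d M p) (k : Fin M) :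
    ((d - 1 : ℕ) : ℝ) ≤ (U1 d M hM0 p k + U2 d M hM0 p k) +
      ∑ i ∈ Finset.range (M - 1),
        (T1 d M hM0 p (k + ((i + 1 : ℕ) : Fin M)) + T2 d M hM0 p (k + ((i + 1 : ℕ) : Fin M))) := by
  have hch := chain hd hM hM0 p hpos hns k (M - 1)
  have hMsub : M - 1 + 1 = M := by omega
  have hSt : St d M hM0 p k (M - 1)
      = EE d M p (fun a _ c => (em d c - em d a - 1).val) k ⟨0, hM0⟩ k := by
    unfold St
    rw [hMsub]
    rw [dlt_total hd hM k]
    rw [Fin.natCast_self, add_zero]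
  have hfin : ((d - 1 : ℕ) : ℝ)
      ≤ St d M hM0 p k (M - 1) + U1 d M hM0 p k := by
    rw [hSt]
    have hcc : ((d - 1 : ℕ) : ℝ) = EE d M p (fun _ _ _ => (d - 1 : ℕ)) k ⟨0, hM0⟩ k :=
      (EE_const p hnorm (d - 1) k ⟨0, hM0⟩ k).symm
    rw [hcc]
    unfold U1
    refine EE_le_add p hpos (fun a b c => ?_) k ⟨0, hM0⟩ k
    rw [← val_neg_one hd]
    refine val_le_add hd ?_
    unfold em
    ring
  linarith

end BKPMono

/-- Theorem 1, inequality (18): tight monogamy relation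
`(M-1)·I_AB^{M,d} + I_AC^{M,d} ≥ M(d-1)` for tripartite no-signaling correlations. -/
theorem bkp_monogamy_left (d M : ℕ) (hd : 2 ≤ d) (hM : 2 ≤ M)
    (p : Fin d → Fin d → Fin d → Fin M → Fin M → Fin M → ℝ)
    (hpos : ∀ a b c x y z, 0 ≤ p a b c x y z)
    (hnorm : ∀ x y z, ∑ a, ∑ b, ∑ c, p a b c x y z = 1)
    (hns : NoSignalingTri d M p) :
    (M : ℝ) * ((d : ℝ) - 1) ≤
      ((M : ℝ) - 1) *
          BKP d M (by omega) (fun a b x y => ∑ c, p a b c x y ⟨0, by omega⟩)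
        + BKP d M (by omega) (fun a c x z => ∑ b, p a b c x ⟨0, by omega⟩ z) := by

  haveI : NeZero M := ⟨by omega⟩
  haveI : NeZero d := ⟨by omega⟩
  have hM0 : 0 < M := by omega
  rw [BKPMono.bkp_ab hM hM0 p, BKPMono.bkp_ac hM hM0 p]
  have hcyc := BKPMono.cycle hd hM hM0 p hpos hnorm hns
  have hsum := Finset.sum_le_sum (fun k (_ : k ∈ Finset.univ) => hcyc k)
  rw [Finset.sum_add_distrib] at hsum
  have h2 : ∑ k : Fin M, ∑ i ∈ Finset.range (M - 1),
        (BKPMono.T1 d M hM0 p (k + ((i + 1 : ℕ) : Fin M))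
          + BKPMono.T2 d M hM0 p (k + ((i + 1 : ℕ) : Fin M)))
      = ((M - 1 : ℕ) : ℝ) * ∑ α : Fin M, (BKPMono.T1 d M hM0 p α + BKPMono.T2 d M hM0 p α) := by
    rw [Finset.sum_comm]
    have hswap : ∀ i : ℕ, (∑ k : Fin M,
          (BKPMono.T1 d M hM0 p (k + ((i + 1 : ℕ) : Fin M))
            + BKPMono.T2 d M hM0 p (k + ((i + 1 : ℕ) : Fin M))))
        = ∑ α : Fin M, (BKPMono.T1 d M hM0 p α + BKPMono.T2 d M hM0 p α) := fun i =>
      Fintype.sum_equiv (Equiv.addRight ((i + 1 : ℕ) : Fin M)) _ _ (fun k => rfl)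
    rw [Finset.sum_congr rfl (fun i _ => hswap i), Finset.sum_const, Finset.card_range,
      nsmul_eq_mul]
  rw [h2] at hsum
  simp only [Finset.sum_const, Finset.card_univ, Fintype.card_fin, nsmul_eq_mul] at hsum
  have hc1 : ((d - 1 : ℕ) : ℝ) = (d : ℝ) - 1 := by
    push_cast [Nat.cast_sub (by omega : 1 ≤ d)]
    ring
  have hc2 : ((M - 1 : ℕ) : ℝ) = (M : ℝ) - 1 := by
    push_cast [Nat.cast_sub (by omega : 1 ≤ M)]
    ring
  rw [hc1, hc2] at hsum
  linarith
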